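/- Let (n,k,r,δ) be integers with 0 < r < k ≤ n − ⌈k/r⌉(δ−1), δ ≥ 2, ⌈k/r⌉ = 2, and set a = 2r − k, b = ⌈n/(r+δ−1)⌉(r+δ−1) − n with b > a ≥ 1. If ⌈n/(r+δ−1)⌉ ≥ ⌈b/a⌉ + 1, then there exists an (n,k,d,r,δ)-matroid achieving d = n − k + 1 − (δ − 1). -/

import Mathlib

/-- A set is cyclic if removing any single element does not change its rank. -/
def IsCyclicSet (ρ : Finset ℕ → ℕ) (X : Finset ℕ) : Prop :=
  ∀ x ∈ X, ρ (X.erase x) = ρ X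

/-- `(E, ρ)` satisfies the matroid rank axioms. -/
def IsRankFn (E : Finset ℕ) (ρ : Finset ℕ → ℕ) : Prop :=
  (∀ X, X ⊆ E → ρ X ≤ X.card) ∧
  (∀ X Y, X ⊆ Y → Y ⊆ E → ρ X ≤ ρ Y) ∧
  (∀ X Y, X ⊆ E → Y ⊆ E → ρ (X ∪ Y) + ρ (X ∩ Y) ≤ ρ X + ρ Y)

/-- All-symbol `(r, δ)`-locality. -/
def HasLocality (E : Finset ℕ) (ρ : Finset ℕ → ℕ) (r δ : ℕ) : Prop :=
  ∀ x ∈ E, ∃ S, S ⊆ E ∧ x ∈ S ∧ IsCyclicSet ρ S ∧ S.card ≤ r + δ - 1 ∧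
    ∀ L, L ⊆ S → L.card + (δ - 1) = S.card →
      ∀ l ∈ S, l ∉ L → ρ (insert l L) = ρ L

/-- The minimum distance: the minimum size of a circuit of the dual matroid. -/
noncomputable def dmin (E : Finset ℕ) (ρ : Finset ℕ → ℕ) : ℕ :=
  sInf {c : ℕ | ∃ C, C ⊆ E ∧ ρ (E \ C) < ρ E ∧
    (∀ C', C' ⊂ C → ρ (E \ C') = ρ E) ∧ C.card = c}

/-!
Cover `[0, n)` by `m = ⌈n / (r + δ - 1)⌉` intervals of length `r + δ - 1`, any two meeting in at
most `a = 2r - k` points; the hypothesis `⌈b / a⌉ + 1 ≤ m` says exactly that the excess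
`b = m (r + δ - 1) - n` can be absorbed by overlaps of size `a`. Take
`ρ X = min (|X|, k, min_S (r + |X \ S|))`. On each block this is the uniform rank `min (|X|, r)`,
which gives the `(r, δ)`-locality, and `k + a = 2r` is what keeps `ρ` submodular across two
different blocks. A set of rank `< k` has at most `k + δ - 2` elements (it is small, or it has at
most `k - r - 1` elements outside some block), so cocircuits have at least `n - k - δ + 2`
elements; the complement of a block padded to `k + δ - 2` elements attains this.
-/

open Finset

section BlockRank

variable {α : Type*} [DecidableEq α] (𝒮 : Finset (Finset α)) (r k : ℕ)

def blockRank (X : Finset α) : ℕ :=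
  𝒮.fold min (min #X k) fun S => r + #(X \ S)

theorem blockRank_attained (X : Finset α) :
    #X ≤ blockRank 𝒮 r k X ∨ k ≤ blockRank 𝒮 r k X ∨
      ∃ S ∈ 𝒮, r + #(X \ S) ≤ blockRank 𝒮 r k X := by
  have := (fold_min_le (blockRank 𝒮 r k X)).1 le_rfl
  rwa [min_le_iff, or_assoc] at this

variable {𝒮 r k}

theorem le_blockRank_iff {c : ℕ} {X : Finset α} :
    c ≤ blockRank 𝒮 r k X ↔ c ≤ #X ∧ c ≤ k ∧ ∀ S ∈ 𝒮, c ≤ r + #(X \ S) := by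
  rw [blockRank, le_fold_min, le_min_iff, and_assoc]

theorem blockRank_le_card (X : Finset α) : blockRank 𝒮 r k X ≤ #X :=
  (le_blockRank_iff.1 le_rfl).1

theorem blockRank_le (X : Finset α) : blockRank 𝒮 r k X ≤ k :=
  (le_blockRank_iff.1 le_rfl).2.1

theorem blockRank_le_add_card_sdiff {S : Finset α} (hS : S ∈ 𝒮) (X : Finset α) :
    blockRank 𝒮 r k X ≤ r + #(X \ S) :=
  (le_blockRank_iff.1 le_rfl).2.2 S hS

theorem blockRank_mono {X Y : Finset α} (h : X ⊆ Y) : blockRank 𝒮 r k X ≤ blockRank 𝒮 r k Y :=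
  le_blockRank_iff.2 ⟨(blockRank_le_card X).trans (card_le_card h), blockRank_le X,
    fun _ hS => (blockRank_le_add_card_sdiff hS X).trans
      (Nat.add_le_add_left (card_le_card (sdiff_subset_sdiff h le_rfl)) r)⟩

theorem blockRank_of_subset_block (hrk : r ≤ k) {S Y : Finset α} (hS : S ∈ 𝒮) (hY : Y ⊆ S) :
    blockRank 𝒮 r k Y = min #Y r := by
  refine le_antisymm (le_min (blockRank_le_card Y) ?_) (le_blockRank_iff.2 ⟨min_le_left _ _,
    (min_le_right _ _).trans hrk, fun _ _ => (min_le_right _ _).trans le_self_add⟩)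
  simpa [sdiff_eq_empty_iff_subset.2 hY] using blockRank_le_add_card_sdiff hS Y

theorem card_lt_of_blockRank_lt {t : ℕ} (h𝒮 : ∀ S ∈ 𝒮, #S ≤ r + t) {X : Finset α}
    (hX : blockRank 𝒮 r k X < k) : #X < k + t := by
  rcases blockRank_attained 𝒮 r k X with h | h | ⟨S, hS, h⟩
  · omega
  · omega
  · have : #X ≤ #(X \ S) + #S := card_le_card_sdiff_add_card
    have := h𝒮 S hS
    omega

theorem blockRank_union_add_inter_le_of_card_or_rank {X Y : Finset α}
    (hX : #X ≤ blockRank 𝒮 r k X ∨ k ≤ blockRank 𝒮 r k X)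
    (hY : #Y ≤ blockRank 𝒮 r k Y ∨ k ≤ blockRank 𝒮 r k Y ∨
      ∃ S ∈ 𝒮, r + #(Y \ S) ≤ blockRank 𝒮 r k Y) :
    blockRank 𝒮 r k (X ∪ Y) + blockRank 𝒮 r k (X ∩ Y) ≤
      blockRank 𝒮 r k X + blockRank 𝒮 r k Y := by
  have hU : blockRank 𝒮 r k (X ∪ Y) ≤ k := blockRank_le _
  have hI : blockRank 𝒮 r k (X ∩ Y) ≤ #(X ∩ Y) := blockRank_le_card _
  have hI' : blockRank 𝒮 r k (X ∩ Y) ≤ k := blockRank_le _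
  have hIX := card_le_card (inter_subset_left : X ∩ Y ⊆ X)
  have hIY := card_le_card (inter_subset_right : X ∩ Y ⊆ Y)
  rcases hY with hY | hY | ⟨S, hS, hY⟩ <;> rcases hX with hX | hX
  · have : blockRank 𝒮 r k (X ∪ Y) ≤ #(X ∪ Y) := blockRank_le_card _
    have := card_union_add_card_inter X Y
    omega
  · omega
  · omega
  · omega
  · have hUS : blockRank 𝒮 r k (X ∪ Y) ≤ r + #((X ∪ Y) \ S) := blockRank_le_add_card_sdiff hS _
    have hsub : (X ∪ Y) \ S ⊆ (X \ Y) ∪ (Y \ S) := by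
      intro e; simp only [mem_sdiff, mem_union]; tauto
    have := (card_le_card hsub).trans (card_union_le _ _)
    have := card_sdiff_add_card_inter X Y
    omega
  · have hIS : blockRank 𝒮 r k (X ∩ Y) ≤ r + #((X ∩ Y) \ S) :=
      blockRank_le_add_card_sdiff hS _
    have := card_le_card (sdiff_subset_sdiff (inter_subset_right : X ∩ Y ⊆ Y) (subset_refl S))
    omega

theorem blockRank_union_add_inter_le_of_blocks
    (h𝒮 : ∀ S ∈ 𝒮, ∀ T ∈ 𝒮, S ≠ T → k + #(S ∩ T) ≤ 2 * r)
    {X Y S T : Finset α} (hS : S ∈ 𝒮) (hT : T ∈ 𝒮)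
    (hX : r + #(X \ S) ≤ blockRank 𝒮 r k X) (hY : r + #(Y \ T) ≤ blockRank 𝒮 r k Y) :
    blockRank 𝒮 r k (X ∪ Y) + blockRank 𝒮 r k (X ∩ Y) ≤
      blockRank 𝒮 r k X + blockRank 𝒮 r k Y := by
  by_cases hST : S = T
  · subst hST
    have hU : blockRank 𝒮 r k (X ∪ Y) ≤ r + #((X ∪ Y) \ S) := blockRank_le_add_card_sdiff hS _
    have hI : blockRank 𝒮 r k (X ∩ Y) ≤ r + #((X ∩ Y) \ S) := blockRank_le_add_card_sdiff hS _
    rw [union_sdiff_distrib] at hU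
    rw [show (X ∩ Y) \ S = (X \ S) ∩ (Y \ S) from inf_sdiff] at hI
    have := card_union_add_card_inter (X \ S) (Y \ S)
    omega
  · have hsub : X ∩ Y ⊆ (S ∩ T) ∪ ((X \ S) ∪ (Y \ T)) := by
      intro e; simp only [mem_inter, mem_union, mem_sdiff]; tauto
    have := (card_le_card hsub).trans (card_union_le _ _)
    have := card_union_le (X \ S) (Y \ T)
    have := h𝒮 S hS T hT hST
    have : blockRank 𝒮 r k (X ∪ Y) ≤ k := blockRank_le _
    have : blockRank 𝒮 r k (X ∩ Y) ≤ #(X ∩ Y) := blockRank_le_card _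
    omega

theorem blockRank_union_add_inter_le
    (h𝒮 : ∀ S ∈ 𝒮, ∀ T ∈ 𝒮, S ≠ T → k + #(S ∩ T) ≤ 2 * r) (X Y : Finset α) :
    blockRank 𝒮 r k (X ∪ Y) + blockRank 𝒮 r k (X ∩ Y) ≤
      blockRank 𝒮 r k X + blockRank 𝒮 r k Y := by
  rcases blockRank_attained 𝒮 r k X with hX | hX | ⟨S, hS, hX⟩
  · exact blockRank_union_add_inter_le_of_card_or_rank (.inl hX) (blockRank_attained 𝒮 r k Y)
  · exact blockRank_union_add_inter_le_of_card_or_rank (.inr hX) (blockRank_attained 𝒮 r k Y)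
  rcases blockRank_attained 𝒮 r k Y with hY | hY | ⟨T, hT, hY⟩
  · rw [union_comm, inter_comm, add_comm (blockRank 𝒮 r k X)]
    exact blockRank_union_add_inter_le_of_card_or_rank (.inl hY) (.inr (.inr ⟨S, hS, hX⟩))
  · rw [union_comm, inter_comm, add_comm (blockRank 𝒮 r k X)]
    exact blockRank_union_add_inter_le_of_card_or_rank (.inr hY) (.inr (.inr ⟨S, hS, hX⟩))
  · exact blockRank_union_add_inter_le_of_blocks h𝒮 hS hT hX hY

end BlockRank

structure IsBlockCover {α : Type*} [DecidableEq α] (E : Finset α) (𝒮 : Finset (Finset α))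
    (s a : ℕ) : Prop where
  subset : ∀ S ∈ 𝒮, S ⊆ E
  card_eq : ∀ S ∈ 𝒮, #S = s
  cover : ∀ e ∈ E, ∃ S ∈ 𝒮, e ∈ S
  card_inter_le : ∀ S ∈ 𝒮, ∀ T ∈ 𝒮, S ≠ T → #(S ∩ T) ≤ a

theorem exists_cocircuit_subset {E C : Finset ℕ} {ρ : Finset ℕ → ℕ}
    (hρE : ∀ X ⊆ E, ρ X ≤ ρ E) (hC : ρ (E \ C) < ρ E) :
    ∃ C₀ ⊆ C, ρ (E \ C₀) < ρ E ∧ ∀ C' ⊂ C₀, ρ (E \ C') = ρ E := by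
  obtain ⟨C₀, hC₀⟩ := exists_minimal (s := {D ∈ C.powerset | ρ (E \ D) < ρ E}) ⟨C, by simpa⟩
  simp only [mem_filter, mem_powerset] at hC₀
  refine ⟨C₀, hC₀.1.1, hC₀.1.2, fun C' hC' => le_antisymm (hρE _ sdiff_subset) ?_⟩
  by_contra! hlt
  exact hC'.2 (hC₀.2 ⟨hC'.1.trans hC₀.1.1, hlt⟩ hC'.1)

theorem dmin_le_card {E C : Finset ℕ} {ρ : Finset ℕ → ℕ}
    (hρE : ∀ X ⊆ E, ρ X ≤ ρ E) (hCE : C ⊆ E) (hC : ρ (E \ C) < ρ E) : dmin E ρ ≤ #C := by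
  obtain ⟨C₀, hC₀C, hC₀, hmin⟩ := exists_cocircuit_subset hρE hC
  unfold dmin
  exact le_trans (Nat.sInf_le ⟨C₀, hC₀C.trans hCE, hC₀, hmin, rfl⟩) (card_le_card hC₀C)

theorem le_dmin {E C : Finset ℕ} {ρ : Finset ℕ → ℕ}
    (hρE : ∀ X ⊆ E, ρ X ≤ ρ E) (hCE : C ⊆ E) (hC : ρ (E \ C) < ρ E) {c : ℕ}
    (h : ∀ C ⊆ E, ρ (E \ C) < ρ E → c ≤ #C) : c ≤ dmin E ρ := by
  obtain ⟨C₀, hC₀C, hC₀, hmin⟩ := exists_cocircuit_subset hρE hC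
  unfold dmin
  exact le_csInf ⟨#C₀, C₀, hC₀C.trans hCE, hC₀, hmin, rfl⟩
    fun _ ⟨C, hCE, hC, _, hc⟩ => hc ▸ h C hCE hC

section BlockMatroid

variable {E : Finset ℕ} {𝒮 : Finset (Finset ℕ)} {r k a : ℕ}

theorem isRankFn_blockRank (h𝒮 : ∀ S ∈ 𝒮, ∀ T ∈ 𝒮, S ≠ T → k + #(S ∩ T) ≤ 2 * r) :
    IsRankFn E (blockRank 𝒮 r k) :=
  ⟨fun X _ => blockRank_le_card X, fun _ _ h _ => blockRank_mono h,
    fun X Y _ _ => blockRank_union_add_inter_le h𝒮 X Y⟩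

theorem IsBlockCover.blockRank_eq {s : ℕ} (h𝒮 : IsBlockCover E 𝒮 s a) (hk : k ≤ #E)
    (hks : k + s ≤ #E + r) : blockRank 𝒮 r k E = k := by
  refine le_antisymm (blockRank_le E) (le_blockRank_iff.2 ⟨hk, le_rfl, fun S hS => ?_⟩)
  rw [card_sdiff_of_subset (h𝒮.subset S hS), h𝒮.card_eq S hS]
  omega

theorem IsBlockCover.hasLocality_blockRank {δ : ℕ} (h𝒮 : IsBlockCover E 𝒮 (r + δ - 1) a)
    (hδ : 2 ≤ δ) (hrk : r ≤ k) : HasLocality E (blockRank 𝒮 r k) r δ := by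
  intro e he
  obtain ⟨S, hS, heS⟩ := h𝒮.cover e he
  have hcard := h𝒮.card_eq S hS
  refine ⟨S, h𝒮.subset S hS, heS, fun x hx => ?_, hcard.le, fun L hL hLcard l hl hlL => ?_⟩
  · rw [blockRank_of_subset_block hrk hS (erase_subset x S), blockRank_of_subset_block hrk hS
      subset_rfl, card_erase_of_mem hx]
    omega
  · rw [blockRank_of_subset_block hrk hS (insert_subset hl hL), blockRank_of_subset_block hrk hS hL,
      card_insert_of_notMem hlL]
    omega

theorem IsBlockCover.dmin_blockRank {δ : ℕ} (h𝒮 : IsBlockCover E 𝒮 (r + δ - 1) a) {S : Finset ℕ}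
    (hS : S ∈ 𝒮) (hδ : 1 ≤ δ) (hrk : r < k) (hE : k + δ - 2 ≤ #E)
    (hρE : blockRank 𝒮 r k E = k) :
    (dmin E (blockRank 𝒮 r k) : ℤ) = #E - k + 1 - (δ - 1) := by
  have hmono : ∀ X ⊆ E, blockRank 𝒮 r k X ≤ blockRank 𝒮 r k E := fun _ => blockRank_mono
  have hcard := h𝒮.card_eq S hS
  obtain ⟨X, hSX, hXE, hX⟩ := exists_subsuperset_card_eq (n := k + δ - 2) (h𝒮.subset S hS)
    (by omega) hE
  have hXrank : blockRank 𝒮 r k (E \ (E \ X)) < blockRank 𝒮 r k E := by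
    have : blockRank 𝒮 r k X ≤ r + #(X \ S) := blockRank_le_add_card_sdiff hS X
    rw [Finset.sdiff_sdiff_eq_self hXE, hρE]
    rw [card_sdiff_of_subset hSX] at this
    omega
  have hupper := dmin_le_card hmono sdiff_subset hXrank
  have hlower := le_dmin hmono sdiff_subset hXrank (c := #E + 2 - (k + δ)) fun C hCE hC => by
    have := card_lt_of_blockRank_lt (t := δ - 1) (fun T hT => (h𝒮.card_eq T hT).le.trans
      (by omega)) (hρE ▸ hC)
    rw [card_sdiff_of_subset hCE] at this
    omega
  rw [card_sdiff_of_subset hXE] at hupper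
  omega

end BlockMatroid

theorem exists_le_lt_add_of_succ_le {x : ℕ → ℕ} {s : ℕ} (h0 : x 0 = 0)
    (hsucc : ∀ i, x (i + 1) ≤ x i + s) (j : ℕ) {e : ℕ} (he : e < x j + s) :
    ∃ i ≤ j, x i ≤ e ∧ e < x i + s := by
  induction j with
  | zero => exact ⟨0, le_rfl, by simp [h0], he⟩
  | succ j ih =>
    by_cases hj : x (j + 1) ≤ e
    · exact ⟨j + 1, le_rfl, hj, he⟩
    · obtain ⟨i, hij, hi⟩ := ih (by have := hsucc j; omega)
      exact ⟨i, hij.trans j.le_succ, hi⟩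

section IntervalBlocks

variable {s a b : ℕ}

/-- Start of the `i`-th block of length `s`: consecutive blocks overlap in `a` points until the
total overlap reaches `b`, and are disjoint from then on. -/
def blockStart (s a b i : ℕ) : ℕ := i * s - min b (i * a)

theorem blockStart_succ_le (i : ℕ) : blockStart s a b (i + 1) ≤ blockStart s a b i + s := by
  unfold blockStart
  rw [add_mul, add_mul, one_mul, one_mul]
  omega

theorem blockStart_add_le (has : a ≤ s) {i j : ℕ} (hij : i < j) :
    blockStart s a b i + s ≤ blockStart s a b j + a := by
  obtain ⟨t, rfl⟩ := Nat.exists_eq_add_of_lt hij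
  have hi : i * a ≤ i * s := Nat.mul_le_mul_left i has
  have ht : t * a ≤ t * s := Nat.mul_le_mul_left t has
  unfold blockStart
  simp only [add_mul, one_mul]
  omega

theorem blockStart_mono (has : a ≤ s) : Monotone (blockStart s a b) :=
  monotone_nat_of_le_succ fun i => by
    have := blockStart_add_le (b := b) has (Nat.lt_add_one i)
    omega

theorem isBlockCover_intervals {n m : ℕ} (hm : 0 < m) (has : a ≤ s) (hn : n + b = m * s)
    (hb : b ≤ (m - 1) * a) :
    IsBlockCover (range n)
      ((range m).image fun i => Ico (blockStart s a b i) (blockStart s a b i + s)) s a := by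
  have hlast : blockStart s a b (m - 1) + s = n := by
    have : (m - 1) * a ≤ (m - 1) * s := Nat.mul_le_mul_left _ has
    have : (m - 1 + 1) * s = m * s := by rw [Nat.sub_add_cancel hm]
    unfold blockStart
    rw [min_eq_left hb]
    rw [add_mul, one_mul] at this
    omega
  refine ⟨?_, ?_, fun e he => ?_, ?_⟩
  · simp only [mem_image, mem_range, forall_exists_index, and_imp]
    rintro _ i hi rfl e he
    have := blockStart_mono (b := b) has (Nat.le_sub_one_of_lt hi)
    simp only [mem_Ico, mem_range] at he ⊢
    omega
  · simp
  · obtain ⟨i, hi, hei⟩ := exists_le_lt_add_of_succ_le (x := blockStart s a b)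
      (by simp [blockStart]) blockStart_succ_le (m - 1) (e := e)
      (by simp only [mem_range] at he; omega)
    exact ⟨_, mem_image_of_mem _ (mem_range.2 (by omega)), mem_Ico.2 hei⟩
  · simp only [mem_image, mem_range, forall_exists_index, and_imp]
    rintro _ i - rfl _ j - rfl hne
    have hij : i ≠ j := by rintro rfl; exact hne rfl
    rw [Ico_inter_Ico, Nat.card_Ico]
    rcases hij.lt_or_gt with h | h <;>
    · have := blockStart_add_le (b := b) has h
      have := blockStart_mono (b := b) has h.le
      omega

end IntervalBlocks

theorem singleton_achievable_kr2_general (n k r δ a b : ℕ)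
    (hrk : r < k) (hδ : 2 ≤ δ)
    (hkn : k + ((k + r - 1) / r) * (δ - 1) ≤ n)
    (hkr2 : (k + r - 1) / r = 2)
    (ha : a = 2 * r - k)
    (hb : b = ((n + (r + δ - 1) - 1) / (r + δ - 1)) * (r + δ - 1) - n)
    (ha1 : 1 ≤ a)
    (hcond : (b + a - 1) / a + 1 ≤ (n + (r + δ - 1) - 1) / (r + δ - 1)) :
    ∃ (E : Finset ℕ) (ρ : Finset ℕ → ℕ),
      IsRankFn E ρ ∧ E.card = n ∧ ρ E = k ∧ HasLocality E ρ r δ ∧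
      (dmin E ρ : ℤ) = (n : ℤ) - (k : ℤ) + 1 - ((δ : ℤ) - 1) := by
  rw [hkr2] at hkn
  generalize hs : r + δ - 1 = s at hb hcond
  generalize hm : (n + s - 1) / s = m at hb hcond
  have hns : n + b = m * s := by
    have := Nat.lt_div_mul_add (a := n + s - 1) (b := s) (by omega)
    rw [hm] at this
    omega
  have hba : b ≤ (m - 1) * a := by
    have := Nat.lt_div_mul_add (a := b + a - 1) (b := a) ha1
    have := Nat.mul_le_mul_right a (Nat.le_sub_of_add_le hcond)
    omega
  have h𝒮 := isBlockCover_intervals ((Nat.succ_pos _).trans_le hcond) (by omega) hns hba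
  subst hs
  obtain ⟨S, hS, -⟩ := h𝒮.cover 0 (by simp only [mem_range]; omega)
  have hρE := h𝒮.blockRank_eq (k := k) (r := r) (by simp only [card_range]; omega)
    (by simp only [card_range]; omega)
  refine ⟨_, _, isRankFn_blockRank fun S hS T hT hST => ?_, card_range n, hρE,
    h𝒮.hasLocality_blockRank hδ hrk.le, ?_⟩
  · have := h𝒮.card_inter_le S hS T hT hST
    omega
  · simpa using h𝒮.dmin_blockRank hS (by omega) hrk (by simp only [card_range]; omega) hρE

/-- Let `(n,k,r,δ)` be integers with
`0 < r < k ≤ n − ⌈k/r⌉(δ−1)`, `δ ≥ 2`, `⌈k/r⌉ = 2`, and set `a = 2r − k`,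
`b = ⌈n/(r+δ−1)⌉(r+δ−1) − n` with `b > a ≥ 1`. If
`⌈n/(r+δ−1)⌉ ≥ ⌈b/a⌉ + 1`, then there exists an `(n,k,d,r,δ)`-matroid
achieving `d = n − k + 1 − (δ − 1)`. -/
theorem singleton_achievable_kr2 (n k r δ a b : ℕ)
    (hr0 : 0 < r) (hrk : r < k) (hδ : 2 ≤ δ)
    (hkn : k + ((k + r - 1) / r) * (δ - 1) ≤ n)
    (hkr2 : (k + r - 1) / r = 2)
    (ha : a = 2 * r - k)
    (hb : b = ((n + (r + δ - 1) - 1) / (r + δ - 1)) * (r + δ - 1) - n)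
    (ha1 : 1 ≤ a) (hab : a < b)
    (hcond : (b + a - 1) / a + 1 ≤ (n + (r + δ - 1) - 1) / (r + δ - 1)) :
    ∃ (E : Finset ℕ) (ρ : Finset ℕ → ℕ),
      IsRankFn E ρ ∧ E.card = n ∧ ρ E = k ∧ HasLocality E ρ r δ ∧
      (dmin E ρ : ℤ) = (n : ℤ) - (k : ℤ) + 1 - ((δ : ℤ) - 1) :=
  singleton_achievable_kr2_general n k r δ a b hrk hδ hkn hkr2 ha hb ha1 hcond
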